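/- arXiv:2407.07759 — 5 statements merged into one kernel-verified Lean document; each statement's English description precedes it below -/
import Mathlib

section
/- For every contextual propositional formula φ (with a single context variable c occurring non-nested), every context C, and every valuation β, there exists a valuation β' agreeing with β on all atoms occurring in the instantiation of φ by C, such that ⟦C(φ)⟧β = ⟦κ_φ(φ)⟧β', where κ_φ is the canonical instantiation of φ. -/
inductive PForm (α : Type) : Type
  | tru : PForm α
  | fls : PForm α
  | atom : α → PForm α
  | natom : α → PForm α
  | and : PForm α → PForm α → PForm α
  | or : PForm α → PForm α → PForm α

variable {α : Type}

def PForm.eval (v : α → Bool) : PForm α → Bool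
  | .tru => true
  | .fls => false
  | .atom a => v a
  | .natom a => !(v a)
  | .and φ ψ => φ.eval v && ψ.eval v
  | .or φ ψ => φ.eval v || ψ.eval v

inductive Ctx (α : Type) : Type
  | tru : Ctx α
  | fls : Ctx α
  | hole : Ctx α
  | atom : α → Ctx α
  | natom : α → Ctx α
  | and : Ctx α → Ctx α → Ctx α
  | or : Ctx α → Ctx α → Ctx α

/-- Fill every hole of a context with a formula. -/
def Ctx.fill : Ctx α → PForm α → PForm α
  | .tru, _ => .tru
  | .fls, _ => .fls
  | .hole, ψ => ψ
  | .atom a, _ => .atom a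
  | .natom a, _ => .natom a
  | .and C D, ψ => .and (C.fill ψ) (D.fill ψ)
  | .or C D, ψ => .or (C.fill ψ) (D.fill ψ)

/-- Negation (De Morgan dual) of an NNF formula. -/
def PForm.negNNF : PForm α → PForm α
  | .tru => .fls
  | .fls => .tru
  | .atom a => .natom a
  | .natom a => .atom a
  | .and φ ψ => .or φ.negNNF ψ.negNNF
  | .or φ ψ => .and φ.negNNF ψ.negNNF

/-- View an ordinary formula as a (hole-free) context. -/
def PForm.toCtx : PForm α → Ctx α
  | .tru => .tru
  | .fls => .fls
  | .atom a => .atom a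
  | .natom a => .natom a
  | .and φ ψ => .and φ.toCtx ψ.toCtx
  | .or φ ψ => .or φ.toCtx ψ.toCtx

def bigAndC : List (Ctx α) → Ctx α := List.foldr Ctx.and Ctx.tru

/-- Contextual formulas with a single, non-nested context variable `c`:
the argument of each `c[ψ]` is an ordinary formula. -/
inductive CForm1 (α : Type) : Type
  | tru : CForm1 α
  | fls : CForm1 α
  | atom : α → CForm1 α
  | natom : α → CForm1 α
  | and : CForm1 α → CForm1 α → CForm1 α
  | or : CForm1 α → CForm1 α → CForm1 α
  | capp : PForm α → CForm1 α

/-- Instantiate the context variable with the context `C`. -/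
def CForm1.inst (C : Ctx α) : CForm1 α → PForm α
  | .tru => .tru
  | .fls => .fls
  | .atom a => .atom a
  | .natom a => .natom a
  | .and φ ψ => .and (φ.inst C) (ψ.inst C)
  | .or φ ψ => .or (φ.inst C) (ψ.inst C)
  | .capp ψ => C.fill ψ

/-- The arguments `ψ` of the context subformulas `c[ψ]` of `φ`. -/
def CForm1.csubs : CForm1 α → List (PForm α)
  | .and φ ψ => φ.csubs ++ ψ.csubs
  | .or φ ψ => φ.csubs ++ ψ.csubs
  | .capp ψ => [ψ]
  | _ => []

def PForm.mapAtoms (f : α → δ) : PForm α → PForm δ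
  | .tru => .tru
  | .fls => .fls
  | .atom a => .atom (f a)
  | .natom a => .natom (f a)
  | .and φ ψ => .and (φ.mapAtoms f) (ψ.mapAtoms f)
  | .or φ ψ => .or (φ.mapAtoms f) (ψ.mapAtoms f)

def CForm1.mapAtoms (f : α → δ) : CForm1 α → CForm1 δ
  | .tru => .tru
  | .fls => .fls
  | .atom a => .atom (f a)
  | .natom a => .natom (f a)
  | .and φ ψ => .and (φ.mapAtoms f) (ψ.mapAtoms f)
  | .or φ ψ => .or (φ.mapAtoms f) (ψ.mapAtoms f)
  | .capp ψ => .capp (ψ.mapAtoms f)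

/-- The atom `a` occurs in the formula. -/
def PForm.occurs (a : α) : PForm α → Prop
  | .atom b => b = a
  | .natom b => b = a
  | .and φ ψ => φ.occurs a ∨ ψ.occurs a
  | .or φ ψ => φ.occurs a ∨ ψ.occurs a
  | _ => False

/-- The canonical instantiation `κ_φ(c) := ⋀ᵢ ((□ → ψᵢ) → pᵢ)`, with fresh atom
`pᵢ = Sum.inr ψᵢ`, written in NNF as `(□ ∧ ¬ψᵢ) ∨ pᵢ`. -/
def kappa1 (φ : CForm1 α) : Ctx (α ⊕ PForm α) :=
  bigAndC ((φ.csubs).map fun ψ =>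
    Ctx.or (Ctx.and Ctx.hole ((ψ.mapAtoms Sum.inl).negNNF.toCtx)) (Ctx.atom (Sum.inr ψ)))

lemma eval_mapAtoms {δ : Type} (f : α → δ) (w : δ → Bool) (ψ : PForm α) :
    (ψ.mapAtoms f).eval w = ψ.eval (w ∘ f) := by
  induction ψ <;> simp_all [PForm.mapAtoms, PForm.eval]

lemma eval_negNNF (w : α → Bool) (ψ : PForm α) :
    ψ.negNNF.eval w = !ψ.eval w := by
  induction ψ <;> simp_all [PForm.negNNF, PForm.eval]

lemma fill_toCtx (ψ χ : PForm α) : ψ.toCtx.fill χ = ψ := by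
  induction ψ <;> simp_all [PForm.toCtx, Ctx.fill]

lemma fill_mono (w : α → Bool) (D : Ctx α) (ψ χ : PForm α)
    (h : ψ.eval w = true → χ.eval w = true) :
    (D.fill ψ).eval w = true → (D.fill χ).eval w = true := by
  induction D <;> simp_all [Ctx.fill, PForm.eval] <;> tauto

lemma eval_bigAndC_fill (w : α → Bool) (L : List (Ctx α)) (χ : PForm α) :
    ((bigAndC L).fill χ).eval w = L.all fun D => (D.fill χ).eval w := by
  induction L with
  | nil => simp [bigAndC, Ctx.fill, PForm.eval]
  | cons D L ih => simp_all [bigAndC, Ctx.fill, PForm.eval]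

lemma all_map' {β γ : Type} (f : β → γ) (p : γ → Bool) (l : List β) :
    (l.map f).all p = l.all fun x => p (f x) := by
  induction l <;> simp_all

lemma key_all (v : α → Bool) (C : Ctx α) (L : List (PForm α)) (ψ : PForm α)
    (h : ψ ∈ L) :
    (L.all fun χ => (ψ.eval v && !χ.eval v) || (C.fill χ).eval v)
      = (C.fill ψ).eval v := by
  cases hb : (C.fill ψ).eval v with
  | false =>
    rw [← Bool.not_eq_true, List.all_eq_true]
    intro hall
    have := hall ψ h
    simp_all
  | true =>
    rw [List.all_eq_true]
    intro χ hχ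
    cases hi : (ψ.eval v && !χ.eval v) with
    | true => simp
    | false =>
      have himp : ψ.eval v = true → χ.eval v = true := by
        intro h1; by_contra h2; simp_all
      have := fill_mono v C ψ χ himp hb
      simp [this]

theorem canonical_valuation_exists (φ : CForm1 α) (C : Ctx α) (v : α → Bool) :
    ∃ v' : α ⊕ PForm α → Bool,
      (∀ a : α, (φ.inst C).occurs a → v' (Sum.inl a) = v a) ∧
      (φ.inst C).eval v = ((φ.mapAtoms Sum.inl).inst (kappa1 φ)).eval v' := by
  classical
  refine ⟨Sum.elim v (fun ψ => (C.fill ψ).eval v), fun a _ => rfl, ?_⟩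
  set v' : α ⊕ PForm α → Bool := Sum.elim v (fun ψ => (C.fill ψ).eval v) with hv'
  have main : ∀ χ : CForm1 α, χ.csubs ⊆ φ.csubs →
      (χ.inst C).eval v = ((χ.mapAtoms Sum.inl).inst (kappa1 φ)).eval v' := by
    intro χ hsub
    induction χ with
    | tru => rfl
    | fls => rfl
    | atom a => rfl
    | natom a => rfl
    | and χ₁ χ₂ ih₁ ih₂ =>
      simp only [CForm1.csubs, List.append_subset] at hsub
      simp [CForm1.inst, CForm1.mapAtoms, PForm.eval, ih₁ hsub.1, ih₂ hsub.2]
    | or χ₁ χ₂ ih₁ ih₂ =>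
      simp only [CForm1.csubs, List.append_subset] at hsub
      simp [CForm1.inst, CForm1.mapAtoms, PForm.eval, ih₁ hsub.1, ih₂ hsub.2]
    | capp ψ =>
      have hmem : ψ ∈ φ.csubs := hsub (by simp [CForm1.csubs])
      simp only [CForm1.inst, CForm1.mapAtoms, kappa1]
      rw [eval_bigAndC_fill]
      simp only [all_map']
      have key : ∀ χ' : PForm α,
          ((Ctx.or (Ctx.and Ctx.hole ((χ'.mapAtoms Sum.inl).negNNF.toCtx))
            (Ctx.atom (Sum.inr χ'))).fill (ψ.mapAtoms Sum.inl)).eval v'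
          = ((ψ.eval v && !χ'.eval v) || (C.fill χ').eval v) := by
        intro χ'
        simp [Ctx.fill, fill_toCtx, PForm.eval, eval_negNNF, eval_mapAtoms, hv']
      simp only [Function.comp_def, key]
      exact (key_all v C φ.csubs ψ hmem).symm
  exact main φ (fun x h => h)
end

section
/- Satisfiability via the canonical instantiation: a contextual propositional formula φ is satisfiable (i.e., σ(φ) is satisfiable for some instantiation σ) if and only if the ordinary formula κ_φ(φ) is satisfiable. -/
variable {α : Type}

/-- Contextual propositional formulas over context variables `γ` and atoms `α`. -/
inductive CForm (γ α : Type) : Type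
  | tru : CForm γ α
  | fls : CForm γ α
  | atom : α → CForm γ α
  | natom : α → CForm γ α
  | and : CForm γ α → CForm γ α → CForm γ α
  | or : CForm γ α → CForm γ α → CForm γ α
  | capp : γ → CForm γ α → CForm γ α

variable {γ : Type}

/-- Instantiate the context variables (bottom-up). -/
def CForm.inst (σ : γ → Ctx α) : CForm γ α → PForm α
  | .tru => .tru
  | .fls => .fls
  | .atom a => .atom a
  | .natom a => .natom a
  | .and φ ψ => .and (φ.inst σ) (ψ.inst σ)
  | .or φ ψ => .or (φ.inst σ) (ψ.inst σ)
  | .capp c φ => (σ c).fill (φ.inst σ)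

/-- The context subformulas `c[ψ]` of a contextual formula, as pairs `(c, ψ)`. -/
def CForm.csubs : CForm γ α → List (γ × CForm γ α)
  | .and φ ψ => φ.csubs ++ ψ.csubs
  | .or φ ψ => φ.csubs ++ ψ.csubs
  | .capp c φ => (c, φ) :: φ.csubs
  | _ => []

/-- Decontextualization: replace maximal context subformulas by fresh atoms. -/
def CForm.dec : CForm γ α → PForm (α ⊕ γ × CForm γ α)
  | .tru => .tru
  | .fls => .fls
  | .atom a => .atom (Sum.inl a)
  | .natom a => .natom (Sum.inl a)
  | .and φ ψ => .and φ.dec ψ.dec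
  | .or φ ψ => .or φ.dec ψ.dec
  | .capp c φ => .atom (Sum.inr (c, φ))

def CForm.mapAtoms (f : α → δ) : CForm γ α → CForm γ δ
  | .tru => .tru
  | .fls => .fls
  | .atom a => .atom (f a)
  | .natom a => .natom (f a)
  | .and φ ψ => .and (φ.mapAtoms f) (ψ.mapAtoms f)
  | .or φ ψ => .or (φ.mapAtoms f) (ψ.mapAtoms f)
  | .capp c φ => .capp c (φ.mapAtoms f)

/-- The canonical instantiation `κ_φ`:
`κ_φ(c) := ⋀_{c[ψ] ∈ cs(φ)} ((□ → dec ψ) → p_{c[ψ]})`, written in NNF as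
`(□ ∧ ¬ dec ψ) ∨ p_{c[ψ]}`. -/
def kappa [DecidableEq γ] (φ : CForm γ α) (c : γ) : Ctx (α ⊕ γ × CForm γ α) :=
  bigAndC (((φ.csubs).filter (fun x => decide (x.1 = c))).map fun x =>
    Ctx.or (Ctx.and Ctx.hole (PForm.toCtx (PForm.negNNF x.2.dec))) (Ctx.atom (Sum.inr x)))


lemma PForm.negNNF_eval (v : α → Bool) (φ : PForm α) :
    φ.negNNF.eval v = !(φ.eval v) := by
  induction φ <;> simp [PForm.negNNF, PForm.eval, *]

lemma PForm.toCtx_fill (φ ψ : PForm α) : φ.toCtx.fill ψ = φ := by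
  induction φ <;> simp [PForm.toCtx, Ctx.fill, *]

lemma Ctx.fill_mono (C : Ctx α) (v : α → Bool) {ψ₁ ψ₂ : PForm α}
    (h : ψ₁.eval v = true → ψ₂.eval v = true) :
    (C.fill ψ₁).eval v = true → (C.fill ψ₂).eval v = true := by
  induction C with
  | tru => simp [Ctx.fill]
  | fls => simp [Ctx.fill]
  | hole => exact h
  | atom a => simp [Ctx.fill]
  | natom a => simp [Ctx.fill]
  | and C D ihC ihD =>
      simp only [Ctx.fill, PForm.eval, Bool.and_eq_true]
      rintro ⟨h1, h2⟩; exact ⟨ihC h1, ihD h2⟩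
  | or C D ihC ihD =>
      simp only [Ctx.fill, PForm.eval, Bool.or_eq_true]
      rintro (h1 | h2)
      · exact Or.inl (ihC h1)
      · exact Or.inr (ihD h2)

lemma bigAndC_fill_eval (L : List (Ctx α)) (χ : PForm α) (v : α → Bool) :
    ((bigAndC L).fill χ).eval v = true ↔ ∀ C ∈ L, (C.fill χ).eval v = true := by
  induction L with
  | nil => simp [bigAndC, Ctx.fill, PForm.eval]
  | cons C L ih =>
      simp only [bigAndC, List.foldr] at *
      simp [Ctx.fill, PForm.eval, ih]

/-- The canonical valuation built from `σ` and `v`. -/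
def wfun (σ : γ → Ctx (α ⊕ γ × CForm γ α)) (v : α ⊕ γ × CForm γ α → Bool) :
    α ⊕ γ × CForm γ α → Bool
  | .inl a => v (.inl a)
  | .inr x => ((σ x.1).fill ((x.2.mapAtoms Sum.inl).inst σ)).eval v

lemma dec_eval (σ : γ → Ctx (α ⊕ γ × CForm γ α)) (v : α ⊕ γ × CForm γ α → Bool)
    (ψ : CForm γ α) :
    ψ.dec.eval (wfun σ v) = ((ψ.mapAtoms Sum.inl).inst σ).eval v := by
  induction ψ <;> simp [CForm.dec, CForm.mapAtoms, CForm.inst, PForm.eval, wfun, *]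

lemma kappa_main [DecidableEq γ] (φ : CForm γ α)
    (σ : γ → Ctx (α ⊕ γ × CForm γ α)) (v : α ⊕ γ × CForm γ α → Bool)
    (ψ : CForm γ α) (h : ψ.dec.eval (wfun σ v) = true) :
    ((ψ.mapAtoms Sum.inl).inst (kappa φ)).eval (wfun σ v) = true := by
  induction ψ with
  | tru => simp [CForm.mapAtoms, CForm.inst, PForm.eval]
  | fls => simp [CForm.dec, PForm.eval] at h
  | atom a => simpa [CForm.dec, CForm.mapAtoms, CForm.inst, PForm.eval] using h
  | natom a => simpa [CForm.dec, CForm.mapAtoms, CForm.inst, PForm.eval] using h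
  | and ψ₁ ψ₂ ih₁ ih₂ =>
      simp only [CForm.dec, CForm.mapAtoms, CForm.inst, PForm.eval,
        Bool.and_eq_true] at h ⊢
      exact ⟨ih₁ h.1, ih₂ h.2⟩
  | or ψ₁ ψ₂ ih₁ ih₂ =>
      simp only [CForm.dec, CForm.mapAtoms, CForm.inst, PForm.eval,
        Bool.or_eq_true] at h ⊢
      rcases h with h | h
      · exact Or.inl (ih₁ h)
      · exact Or.inr (ih₂ h)
  | capp c ψ ih =>
      have h' : ((σ c).fill ((ψ.mapAtoms Sum.inl).inst σ)).eval v = true := by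
        simpa [CForm.dec, PForm.eval, wfun] using h
      simp only [CForm.mapAtoms, CForm.inst, kappa]
      rw [bigAndC_fill_eval]
      intro C hC
      rcases List.mem_map.mp hC with ⟨x, hx, rfl⟩
      have hxc : x.1 = c := by
        have := List.of_mem_filter hx
        simpa using this
      subst hxc
      simp only [Ctx.fill, PForm.toCtx_fill, PForm.eval, Bool.or_eq_true,
        Bool.and_eq_true]
      by_cases hw : wfun σ v (Sum.inr x) = true
      · exact Or.inr hw
      · left
        have hw' : ((σ x.1).fill ((x.2.mapAtoms Sum.inl).inst σ)).eval v = false := by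
          simpa [wfun] using hw
        have hψ : ((ψ.mapAtoms Sum.inl).inst σ).eval v = true := by
          by_contra hψ'
          have := Ctx.fill_mono (σ x.1) v
            (ψ₁ := (ψ.mapAtoms Sum.inl).inst σ) (ψ₂ := (x.2.mapAtoms Sum.inl).inst σ)
            (fun ht => absurd ht hψ') h'
          rw [hw'] at this; exact Bool.false_ne_true this
        have hx2 : ((x.2.mapAtoms Sum.inl).inst σ).eval v = false := by
          by_contra hx2'
          have hx2t : ((x.2.mapAtoms Sum.inl).inst σ).eval v = true := by
            simpa using hx2'
          have := Ctx.fill_mono (σ x.1) v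
            (ψ₁ := (ψ.mapAtoms Sum.inl).inst σ) (ψ₂ := (x.2.mapAtoms Sum.inl).inst σ)
            (fun _ => hx2t) h'
          rw [hw'] at this; exact Bool.false_ne_true this
        refine ⟨?_, ?_⟩
        · exact ih (by rw [dec_eval]; exact hψ)
        · rw [PForm.negNNF_eval, dec_eval, hx2]; rfl

/-- Satisfiability via the canonical instantiation. -/
theorem canonical_instantiation_sat {γ α : Type} [DecidableEq γ] (φ : CForm γ α) :
    (∃ (σ : γ → Ctx (α ⊕ γ × CForm γ α)) (v : α ⊕ γ × CForm γ α → Bool),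
        ((φ.mapAtoms Sum.inl).inst σ).eval v = true) ↔
    (∃ v : α ⊕ γ × CForm γ α → Bool,
        ((φ.mapAtoms Sum.inl).inst (kappa φ)).eval v = true) := by
  constructor
  · rintro ⟨σ, v, h⟩
    refine ⟨wfun σ v, ?_⟩
    exact kappa_main φ σ v φ (by rw [dec_eval]; exact h)
  · rintro ⟨v, h⟩
    exact ⟨kappa φ, v, h⟩
end

section
/- Context idempotence is contextually valid: for every propositional context C and every valuation β, ⟦C[p]⟧β = ⟦C[C[p]]⟧β. -/
variable {α : Type}

/-- Evaluate a context with the hole given Boolean value `b`. -/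
def Ctx.evalHole (v : α → Bool) : Ctx α → Bool → Bool
  | .tru, _ => true
  | .fls, _ => false
  | .hole, b => b
  | .atom a, _ => v a
  | .natom a, _ => !(v a)
  | .and C D, b => C.evalHole v b && D.evalHole v b
  | .or C D, b => C.evalHole v b || D.evalHole v b

theorem Ctx.fill_eval (C : Ctx α) (v : α → Bool) (ψ : PForm α) :
    (C.fill ψ).eval v = C.evalHole v (ψ.eval v) := by
  induction C with
  | and C D hC hD => simp [Ctx.fill, PForm.eval, Ctx.evalHole, hC, hD]
  | or C D hC hD => simp [Ctx.fill, PForm.eval, Ctx.evalHole, hC, hD]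
  | _ => rfl

theorem Ctx.evalHole_mono (C : Ctx α) (v : α → Bool) :
    C.evalHole v false = true → C.evalHole v true = true := by
  induction C with
  | and C D hC hD =>
    simp only [Ctx.evalHole, Bool.and_eq_true]
    exact fun ⟨h1, h2⟩ => ⟨hC h1, hD h2⟩
  | or C D hC hD =>
    simp only [Ctx.evalHole, Bool.or_eq_true]
    rintro (h | h)
    · exact Or.inl (hC h)
    · exact Or.inr (hD h)
  | _ => simp [Ctx.evalHole]

/-- Context idempotence: `C[p] ≡ C[C[p]]`. -/
theorem context_idempotent (C : Ctx α) (v : α → Bool) (p : α) :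
    (C.fill (.atom p)).eval v = (C.fill (C.fill (.atom p))).eval v := by
  rw [Ctx.fill_eval, Ctx.fill_eval, Ctx.fill_eval]
  have mono := Ctx.evalHole_mono C v
  simp only [PForm.eval]
  cases hb : v p <;>
    cases hf : C.evalHole v false <;> cases ht : C.evalHole v true <;>
    simp_all
end

section
/- Exponential blowup of the canonical instantiation: for the contextual formula φₙ := cⁿ[q] (the context variable c nested n times around the atom q), the ordinary formula κ_{φₙ}(φₙ) obtained from the canonical instantiation has size at least n! (in particular, its size is not bounded by any polynomial in |φₙ| = n + O(1)). -/
variable {α : Type}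

def PForm.size : PForm α → ℕ
  | .and φ ψ => φ.size + ψ.size + 1
  | .or φ ψ => φ.size + ψ.size + 1
  | _ => 1

/-- The canonical instantiation of `φₙ = cⁿ[q]`: atoms are natural numbers, where
`l` stands for the fresh atom `p_{c^l[q]}` and `0` for `q`. The context is
`⋀_{l=1}^{n} ((□ → p_{c^{l-1}[q]}) → p_{c^{l}[q]})`, in NNF. -/
def kappaN (n : ℕ) : Ctx ℕ :=
  bigAndC ((List.range n).map fun l =>
    Ctx.or (Ctx.and Ctx.hole (Ctx.natom l)) (Ctx.atom (l + 1)))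

/-- `κ(c^l[q])`, by iterated hole-filling. -/
def iterInst (n : ℕ) : ℕ → PForm ℕ
  | 0 => .atom 0
  | l + 1 => (kappaN n).fill (iterInst n l)


lemma bigAndC_fill_size (L : List (Ctx ℕ)) (ψ : PForm ℕ) :
    ((bigAndC L).fill ψ).size = (L.map fun C => (C.fill ψ).size).sum + L.length + 1 := by
  induction L with
  | nil => rfl
  | cons C T ih =>
      simp only [bigAndC, List.foldr_cons, Ctx.fill, PForm.size, List.map_cons,
        List.sum_cons, List.length_cons] at *
      omega

lemma kappaN_fill_size (n : ℕ) (ψ : PForm ℕ) :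
    ((kappaN n).fill ψ).size = n * (ψ.size + 5) + 1 := by
  rw [kappaN, bigAndC_fill_size, List.map_map]
  have : (List.map ((fun C => (C.fill ψ).size) ∘ fun l =>
      Ctx.or (Ctx.and Ctx.hole (Ctx.natom l)) (Ctx.atom (l + 1))) (List.range n))
      = List.replicate n (ψ.size + 4) := by
    rw [List.eq_replicate_iff]
    constructor
    · simp
    · intro b hb
      simp [Function.comp, Ctx.fill, PForm.size] at hb
      obtain ⟨a, _, h⟩ := hb
      omega
  rw [this, List.sum_replicate, smul_eq_mul]
  simp
  ring

lemma size_pos (φ : PForm ℕ) : 1 ≤ φ.size := by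
  induction φ <;> simp [PForm.size]

lemma pow_le_iterInst (n l : ℕ) : n ^ l ≤ (iterInst n l).size := by
  induction l with
  | zero => simp [iterInst, PForm.size]
  | succ l ih =>
      rw [iterInst, kappaN_fill_size, pow_succ]
      have h := size_pos (iterInst n l)
      nlinarith

/-- Exponential blowup of the canonical instantiation. -/
theorem canonical_blowup (n : ℕ) : Nat.factorial n ≤ (iterInst n n).size := by
  calc Nat.factorial n ≤ n ^ n := Nat.factorial_le_pow n
    _ ≤ (iterInst n n).size := pow_le_iterInst n n
end

section
/- In a lasso Kripke structure, LTL and μ-calculus semantics coincide under the standard translation: for every lasso L (a finite Kripke structure in which every state has exactly one successor) and every LTL formula φ in negation normal form, L satisfies φ in the LTL sense (every—equivalently, the unique—path from each initial state satisfies φ) if and only if L satisfies the μ-calculus translation m(φ), where Xψ translates to [·]m(ψ), ψ₁ U ψ₂ to μX.(([·]X ∧ m(ψ₁)) ∨ m(ψ₂)), and ψ₁ W ψ₂ to νX.(([·]X ∧ m(ψ₁)) ∨ m(ψ₂)). -/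
/-- Modal μ-calculus formulas in negation normal form, over atoms `α` and variables `β`. -/
inductive MForm (α β : Type) : Type
  | tru : MForm α β
  | fls : MForm α β
  | atom : α → MForm α β
  | natom : α → MForm α β
  | var : β → MForm α β
  | and : MForm α β → MForm α β → MForm α β
  | or : MForm α β → MForm α β → MForm α β
  | dia : MForm α β → MForm α β
  | box : MForm α β → MForm α β
  | mu : β → MForm α β → MForm α β
  | nu : β → MForm α β → MForm α β

/-- A Kripke structure: states, total transition relation, initial states, labelling. -/
structure Kripke (α : Type) where
  S : Type
  rel : S → S → Prop
  init : Set S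
  label : S → α → Prop
  serial : ∀ s, ∃ t, rel s t

variable {α β : Type}

/-- Standard semantics of the μ-calculus. -/
def MForm.sem [DecidableEq β] (K : Kripke α) : MForm α β → (β → Set K.S) → Set K.S
  | .tru, _ => Set.univ
  | .fls, _ => ∅
  | .atom a, _ => {s | K.label s a}
  | .natom a, _ => {s | ¬ K.label s a}
  | .var v, η => η v
  | .and φ ψ, η => φ.sem K η ∩ ψ.sem K η
  | .or φ ψ, η => φ.sem K η ∪ ψ.sem K η
  | .dia φ, η => {s | ∃ t, K.rel s t ∧ t ∈ φ.sem K η}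
  | .box φ, η => {s | ∀ t, K.rel s t → t ∈ φ.sem K η}
  | .mu v φ, η => ⋂₀ {U : Set K.S | φ.sem K (Function.update η v U) ⊆ U}
  | .nu v φ, η => ⋃₀ {U : Set K.S | U ⊆ φ.sem K (Function.update η v U)}

/-- List of all subformulas. -/
def MForm.subfs : MForm α β → List (MForm α β)
  | .and a b => .and a b :: (a.subfs ++ b.subfs)
  | .or a b => .or a b :: (a.subfs ++ b.subfs)
  | .dia a => .dia a :: a.subfs
  | .box a => .box a :: a.subfs
  | .mu v a => .mu v a :: a.subfs
  | .nu v a => .nu v a :: a.subfs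
  | φ => [φ]

/-- `χ` is a fixpoint subformula of `φ` binding the variable `v`. -/
def BindsVar (φ : MForm α β) (v : β) (χ : MForm α β) : Prop :=
  χ ∈ φ.subfs ∧ ∃ ψ, χ = .mu v ψ ∨ χ = .nu v ψ

/-- `v` occurs free in the formula. -/
def MForm.freeIn (v : β) : MForm α β → Prop
  | .var w => w = v
  | .and a b => a.freeIn v ∨ b.freeIn v
  | .or a b => a.freeIn v ∨ b.freeIn v
  | .dia a => a.freeIn v
  | .box a => a.freeIn v
  | .mu w a => w ≠ v ∧ a.freeIn v
  | .nu w a => w ≠ v ∧ a.freeIn v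
  | _ => False

/-- `v` occurs (free or bound) in the formula. -/
def MForm.occursVar (v : β) : MForm α β → Prop
  | .var w => w = v
  | .and a b => a.occursVar v ∨ b.occursVar v
  | .or a b => a.occursVar v ∨ b.occursVar v
  | .dia a => a.occursVar v
  | .box a => a.occursVar v
  | .mu w a => w = v ∨ a.occursVar v
  | .nu w a => w = v ∨ a.occursVar v
  | _ => False

/-- LTL formulas in negation normal form. -/
inductive LTL (α : Type) : Type
  | tru : LTL α
  | fls : LTL α
  | atom : α → LTL α
  | natom : α → LTL α
  | and : LTL α → LTL α → LTL α
  | or : LTL α → LTL α → LTL α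
  | next : LTL α → LTL α
  | until_ : LTL α → LTL α → LTL α
  | wuntil : LTL α → LTL α → LTL α

/-- Semantics of LTL over infinite traces. -/
def LTL.sat (π : ℕ → α → Prop) : LTL α → Prop
  | .tru => True
  | .fls => False
  | .atom a => π 0 a
  | .natom a => ¬ π 0 a
  | .and φ ψ => φ.sat π ∧ ψ.sat π
  | .or φ ψ => φ.sat π ∨ ψ.sat π
  | .next φ => φ.sat (fun i => π (i + 1))
  | .until_ φ ψ =>
      ∃ k, ψ.sat (fun i => π (i + k)) ∧ ∀ j < k, φ.sat (fun i => π (i + j))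
  | .wuntil φ ψ =>
      (∃ k, ψ.sat (fun i => π (i + k)) ∧ ∀ j < k, φ.sat (fun i => π (i + j))) ∨
      (∀ j, φ.sat (fun i => π (i + j)))

/-- Standard translation from LTL to the μ-calculus; the counter `n` provides
fresh variables for the fixpoints. -/
def LTL.trans : ℕ → LTL α → MForm α ℕ
  | _, .tru => .tru
  | _, .fls => .fls
  | _, .atom a => .atom a
  | _, .natom a => .natom a
  | n, .and φ ψ => .and (φ.trans n) (ψ.trans n)
  | n, .or φ ψ => .or (φ.trans n) (ψ.trans n)
  | n, .next φ => .box (φ.trans n)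
  | n, .until_ φ ψ =>
      .mu n (.or (.and (.box (.var n)) (φ.trans (n + 1))) (ψ.trans (n + 1)))
  | n, .wuntil φ ψ =>
      .nu n (.or (.and (.box (.var n)) (φ.trans (n + 1))) (ψ.trans (n + 1)))

/-- Semantics only depends on environment values at free variables. -/
lemma sem_congr [DecidableEq β] (K : Kripke α) (ψ : MForm α β) :
    ∀ η η' : β → Set K.S, (∀ v, ψ.freeIn v → η v = η' v) → ψ.sem K η = ψ.sem K η' := by
  induction ψ with
  | tru => intros; rfl
  | fls => intros; rfl
  | atom a => intros; rfl
  | natom a => intros; rfl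
  | var w => intro η η' h; exact h w rfl
  | and a b iha ihb =>
      intro η η' h
      simp only [MForm.sem, iha η η' (fun v hv => h v (Or.inl hv)),
        ihb η η' (fun v hv => h v (Or.inr hv))]
  | or a b iha ihb =>
      intro η η' h
      simp only [MForm.sem, iha η η' (fun v hv => h v (Or.inl hv)),
        ihb η η' (fun v hv => h v (Or.inr hv))]
  | dia a ih => intro η η' h; simp only [MForm.sem, ih η η' h]
  | box a ih => intro η η' h; simp only [MForm.sem, ih η η' h]
  | mu w a ih =>
      intro η η' h
      have hset : ∀ U : Set K.S,
          a.sem K (Function.update η w U) = a.sem K (Function.update η' w U) := by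
        intro U
        refine ih _ _ (fun v hv => ?_)
        by_cases hvw : v = w
        · subst hvw; simp
        · rw [Function.update_of_ne hvw, Function.update_of_ne hvw]
          exact h v ⟨fun hh => hvw hh.symm, hv⟩
      have : {U : Set K.S | a.sem K (Function.update η w U) ⊆ U} =
          {U : Set K.S | a.sem K (Function.update η' w U) ⊆ U} := by
        ext U; simp only [Set.mem_setOf_eq, hset U]
      simp only [MForm.sem, this]
  | nu w a ih =>
      intro η η' h
      have hset : ∀ U : Set K.S,
          a.sem K (Function.update η w U) = a.sem K (Function.update η' w U) := by
        intro U
        refine ih _ _ (fun v hv => ?_)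
        by_cases hvw : v = w
        · subst hvw; simp
        · rw [Function.update_of_ne hvw, Function.update_of_ne hvw]
          exact h v ⟨fun hh => hvw hh.symm, hv⟩
      have : {U : Set K.S | U ⊆ a.sem K (Function.update η w U)} =
          {U : Set K.S | U ⊆ a.sem K (Function.update η' w U)} := by
        ext U; simp only [Set.mem_setOf_eq, hset U]
      simp only [MForm.sem, this]

/-- Translated formulas are closed. -/
lemma trans_closed (φ : LTL α) : ∀ (n : ℕ) (v : ℕ), ¬ (φ.trans n).freeIn v := by
  induction φ with
  | tru => intro n v; simp [LTL.trans, MForm.freeIn]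
  | fls => intro n v; simp [LTL.trans, MForm.freeIn]
  | atom a => intro n v; simp [LTL.trans, MForm.freeIn]
  | natom a => intro n v; simp [LTL.trans, MForm.freeIn]
  | and a b iha ihb => intro n v; simp [LTL.trans, MForm.freeIn, iha n v, ihb n v]
  | or a b iha ihb => intro n v; simp [LTL.trans, MForm.freeIn, iha n v, ihb n v]
  | next a ih => intro n v; simp [LTL.trans, MForm.freeIn, ih n v]
  | until_ a b iha ihb =>
      intro n v
      simp only [LTL.trans, MForm.freeIn]
      rintro ⟨hne, (h | h) | h⟩
      · exact hne h
      · exact iha (n + 1) v h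
      · exact ihb (n + 1) v h
  | wuntil a b iha ihb =>
      intro n v
      simp only [LTL.trans, MForm.freeIn]
      rintro ⟨hne, (h | h) | h⟩
      · exact hne h
      · exact iha (n + 1) v h
      · exact ihb (n + 1) v h

lemma sem_trans_env (K : Kripke α) (φ : LTL α) (n : ℕ) (η η' : ℕ → Set K.S) :
    (φ.trans n).sem K η = (φ.trans n).sem K η' :=
  sem_congr K _ η η' (fun v hv => absurd hv (trans_closed φ n v))

/-- The successor function of a deterministic Kripke structure. -/
noncomputable def Kripke.nxt (K : Kripke α) (hfun : ∀ s, ∃! t, K.rel s t) (s : K.S) : K.S :=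
  (hfun s).exists.choose

lemma Kripke.nxt_rel (K : Kripke α) (hfun : ∀ s, ∃! t, K.rel s t) (s : K.S) :
    K.rel s (K.nxt hfun s) := (hfun s).exists.choose_spec

lemma Kripke.rel_iff (K : Kripke α) (hfun : ∀ s, ∃! t, K.rel s t) (s t : K.S) :
    K.rel s t ↔ t = K.nxt hfun s :=
  ⟨fun h => (hfun s).unique h (K.nxt_rel hfun s), fun h => h ▸ K.nxt_rel hfun s⟩

/-- Key lemma: on the unique path, LTL and μ-calculus semantics coincide. -/
lemma key_lemma (K : Kripke α) (hfun : ∀ s, ∃! t, K.rel s t) (φ : LTL α) :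
    ∀ (n : ℕ) (η : ℕ → Set K.S) (s : K.S),
      s ∈ (φ.trans n).sem K η ↔
        φ.sat (fun i a => K.label ((K.nxt hfun)^[i] s) a) := by
  set f := K.nxt hfun with hf
  have hshift : ∀ (s : K.S) (k : ℕ),
      (fun i => (fun i a => K.label (f^[i] s) a) (i + k)) =
        (fun i a => K.label (f^[i] (f^[k] s)) a) := by
    intro s k; funext i a
    show K.label (f^[i + k] s) a = K.label (f^[i] (f^[k] s)) a
    rw [Function.iterate_add_apply]
  induction φ with
  | tru => intro n η s; simp [LTL.trans, MForm.sem, LTL.sat]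
  | fls => intro n η s; simp [LTL.trans, MForm.sem, LTL.sat]
  | atom a => intro n η s; simp [LTL.trans, MForm.sem, LTL.sat]
  | natom a => intro n η s; simp [LTL.trans, MForm.sem, LTL.sat]
  | and a b iha ihb =>
      intro n η s; simp [LTL.trans, MForm.sem, LTL.sat, iha n η s, ihb n η s]
  | or a b iha ihb =>
      intro n η s; simp [LTL.trans, MForm.sem, LTL.sat, iha n η s, ihb n η s]
  | next a ih =>
      intro n η s
      have heq : (fun i => (fun i a => K.label (f^[i] s) a) (i + 1)) =
          (fun i a => K.label (f^[i] (f s)) a) := by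
        funext i a
        show K.label (f^[i + 1] s) a = K.label (f^[i] (f s)) a
        rw [Function.iterate_succ_apply]
      simp only [LTL.trans, MForm.sem, LTL.sat, Set.mem_setOf_eq]
      rw [heq]
      constructor
      · intro h; exact (ih n η (f s)).mp (h (f s) (K.nxt_rel hfun s))
      · intro h t ht
        rw [K.rel_iff hfun s t] at ht
        subst ht
        exact (ih n η (f s)).mpr h
  | until_ a b iha ihb =>
      intro n η s
      set body : MForm α ℕ :=
        .or (.and (.box (.var n)) (a.trans (n + 1))) (b.trans (n + 1)) with hbodydef
      have hbody : ∀ (U : Set K.S) (t : K.S),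
          t ∈ body.sem K (Function.update η n U) ↔
            ((f t ∈ U ∧ a.sat (fun i x => K.label (f^[i] t) x)) ∨
              b.sat (fun i x => K.label (f^[i] t) x)) := by
        intro U t
        simp only [hbodydef, MForm.sem, Set.mem_union, Set.mem_inter_iff, Set.mem_setOf_eq,
          Function.update_self, iha (n + 1) _ t, ihb (n + 1) _ t]
        constructor
        · rintro (⟨hb, ha⟩ | hb)
          · exact Or.inl ⟨hb (f t) (K.nxt_rel hfun t), ha⟩
          · exact Or.inr hb
        · rintro (⟨hb, ha⟩ | hb)
          · refine Or.inl ⟨fun u hu => ?_, ha⟩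
            rw [K.rel_iff hfun t u] at hu; subst hu; exact hb
          · exact Or.inr hb
      have hsat : (LTL.until_ a b).sat (fun i x => K.label (f^[i] s) x) ↔
          ∃ k, b.sat (fun i x => K.label (f^[i] (f^[k] s)) x) ∧
            ∀ j < k, a.sat (fun i x => K.label (f^[i] (f^[j] s)) x) := by
        simp only [LTL.sat]
        constructor
        · rintro ⟨k, h1, h2⟩
          exact ⟨k, (hshift s k) ▸ h1, fun j hj => (hshift s j) ▸ h2 j hj⟩
        · rintro ⟨k, h1, h2⟩
          exact ⟨k, (hshift s k).symm ▸ h1, fun j hj => (hshift s j).symm ▸ h2 j hj⟩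
      rw [hsat]
      have hgoal : (LTL.trans n (a.until_ b)).sem K η =
          ⋂₀ {U : Set K.S | body.sem K (Function.update η n U) ⊆ U} := rfl
      rw [hgoal]
      simp only [Set.mem_sInter, Set.mem_setOf_eq]
      constructor
      · intro h
        set R : Set K.S := {t | ∃ k, b.sat (fun i x => K.label (f^[i] (f^[k] t)) x) ∧
            ∀ j < k, a.sat (fun i x => K.label (f^[i] (f^[j] t)) x)} with hR
        refine h R ?_
        intro t ht
        rw [hbody R t] at ht
        rcases ht with ⟨hU, ha⟩ | hb
        · obtain ⟨k, hk1, hk2⟩ := hU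
          refine ⟨k + 1, ?_, ?_⟩
          · rw [Function.iterate_succ_apply]; exact hk1
          · intro j hj
            match j with
            | 0 => simpa using ha
            | j + 1 =>
                rw [Function.iterate_succ_apply]
                exact hk2 j (Nat.succ_lt_succ_iff.mp hj)
        · exact ⟨0, by simpa using hb, fun j hj => absurd hj (Nat.not_lt_zero j)⟩
      · rintro ⟨k, h1, h2⟩
        intro U hU
        clear hsat
        induction k generalizing s with
        | zero =>
            apply hU; rw [hbody U s]
            exact Or.inr (by simpa using h1)
        | succ k ihk =>
            apply hU; rw [hbody U s]
            refine Or.inl ⟨ihk (f s) ?_ ?_, ?_⟩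
            · rw [← Function.iterate_succ_apply]; exact h1
            · intro j hj
              rw [← Function.iterate_succ_apply]
              exact h2 (j + 1) (Nat.succ_lt_succ hj)
            · simpa using h2 0 (Nat.succ_pos k)
  | wuntil a b iha ihb =>
      intro n η s
      set body : MForm α ℕ :=
        .or (.and (.box (.var n)) (a.trans (n + 1))) (b.trans (n + 1)) with hbodydef
      have hbody : ∀ (U : Set K.S) (t : K.S),
          t ∈ body.sem K (Function.update η n U) ↔
            ((f t ∈ U ∧ a.sat (fun i x => K.label (f^[i] t) x)) ∨
              b.sat (fun i x => K.label (f^[i] t) x)) := by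
        intro U t
        simp only [hbodydef, MForm.sem, Set.mem_union, Set.mem_inter_iff, Set.mem_setOf_eq,
          Function.update_self, iha (n + 1) _ t, ihb (n + 1) _ t]
        constructor
        · rintro (⟨hb, ha⟩ | hb)
          · exact Or.inl ⟨hb (f t) (K.nxt_rel hfun t), ha⟩
          · exact Or.inr hb
        · rintro (⟨hb, ha⟩ | hb)
          · refine Or.inl ⟨fun u hu => ?_, ha⟩
            rw [K.rel_iff hfun t u] at hu; subst hu; exact hb
          · exact Or.inr hb
      have hsat : (LTL.wuntil a b).sat (fun i x => K.label (f^[i] s) x) ↔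
          ((∃ k, b.sat (fun i x => K.label (f^[i] (f^[k] s)) x) ∧
            ∀ j < k, a.sat (fun i x => K.label (f^[i] (f^[j] s)) x)) ∨
           ∀ j, a.sat (fun i x => K.label (f^[i] (f^[j] s)) x)) := by
        simp only [LTL.sat]
        constructor
        · rintro (⟨k, h1, h2⟩ | h)
          · exact Or.inl ⟨k, (hshift s k) ▸ h1, fun j hj => (hshift s j) ▸ h2 j hj⟩
          · exact Or.inr (fun j => (hshift s j) ▸ h j)
        · rintro (⟨k, h1, h2⟩ | h)
          · exact Or.inl ⟨k, (hshift s k).symm ▸ h1, fun j hj => (hshift s j).symm ▸ h2 j hj⟩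
          · exact Or.inr (fun j => (hshift s j).symm ▸ h j)
      rw [hsat]
      have hgoal : (LTL.trans n (a.wuntil b)).sem K η =
          ⋃₀ {U : Set K.S | U ⊆ body.sem K (Function.update η n U)} := rfl
      rw [hgoal]
      simp only [Set.mem_sUnion, Set.mem_setOf_eq]
      set W : Set K.S := {t | (∃ k, b.sat (fun i x => K.label (f^[i] (f^[k] t)) x) ∧
          ∀ j < k, a.sat (fun i x => K.label (f^[i] (f^[j] t)) x)) ∨
          ∀ j, a.sat (fun i x => K.label (f^[i] (f^[j] t)) x)} with hW
      constructor
      · rintro ⟨U, hpost, hsU⟩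
        by_cases hR : (∃ k, b.sat (fun i x => K.label (f^[i] (f^[k] s)) x) ∧
            ∀ j < k, a.sat (fun i x => K.label (f^[i] (f^[j] s)) x))
        · exact Or.inl hR
        · refine Or.inr ?_
          have Q : ∀ j, f^[j] s ∈ U ∧ ∀ i < j, a.sat (fun i' x => K.label (f^[i'] (f^[i] s)) x) := by
            intro j
            induction j with
            | zero => exact ⟨hsU, fun i hi => absurd hi (Nat.not_lt_zero i)⟩
            | succ j ihj =>
                obtain ⟨hUj, hAj⟩ := ihj
                have := hpost hUj
                rw [hbody U (f^[j] s)] at this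
                rcases this with ⟨hnext, ha⟩ | hb
                · refine ⟨?_, ?_⟩
                  · rw [Function.iterate_succ_apply']; exact hnext
                  · intro i hi
                    rcases Nat.lt_succ_iff_lt_or_eq.mp hi with hi | hi
                    · exact hAj i hi
                    · subst hi; exact ha
                · exact absurd ⟨j, hb, hAj⟩ hR
          intro j
          exact (Q (j + 1)).2 j (Nat.lt_succ_self j)
      · intro h
        refine ⟨W, ?_, h⟩
        intro t ht
        rw [hbody W t]
        rcases ht with ⟨k, h1, h2⟩ | hG
        · match k with
          | 0 => exact Or.inr (by simpa using h1)
          | k + 1 =>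
              refine Or.inl ⟨Or.inl ⟨k, ?_, ?_⟩, ?_⟩
              · rw [← Function.iterate_succ_apply]; exact h1
              · intro j hj
                rw [← Function.iterate_succ_apply]
                exact h2 (j + 1) (Nat.succ_lt_succ hj)
              · simpa using h2 0 (Nat.succ_pos k)
        · refine Or.inl ⟨Or.inr fun j => ?_, by simpa using hG 0⟩
          rw [← Function.iterate_succ_apply]
          exact hG (j + 1)

/-- In a lasso (finite Kripke structure where every state has exactly one successor),
LTL semantics and μ-calculus semantics of the translation coincide. -/
theorem lasso_ltl_mucalc (K : Kripke α) [Fintype K.S]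
    (hfun : ∀ s, ∃! t, K.rel s t) (φ : LTL α) :
    (∀ p : ℕ → K.S, p 0 ∈ K.init → (∀ i, K.rel (p i) (p (i + 1))) →
        φ.sat (fun i a => K.label (p i) a)) ↔
      K.init ⊆ (φ.trans 0).sem K (fun _ => (∅ : Set K.S)) := by
  set f := K.nxt hfun with hf
  constructor
  · intro h s hs
    rw [key_lemma K hfun φ 0 _ s]
    have hsat := h (fun i => f^[i] s) (by simpa using hs)
      (fun i => by
        show K.rel (f^[i] s) (f^[i + 1] s)
        rw [Function.iterate_succ_apply']
        exact K.nxt_rel hfun _)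
    exact hsat
  · intro h p hp0 hrel
    have hp : ∀ i, p i = f^[i] (p 0) := by
      intro i
      induction i with
      | zero => rfl
      | succ i ih =>
          have := (K.rel_iff hfun (p i) (p (i + 1))).mp (hrel i)
          rw [this, ih, Function.iterate_succ_apply']
    have : (fun i a => K.label (p i) a) = (fun i a => K.label (f^[i] (p 0)) a) := by
      funext i a; rw [hp i]
    rw [this]
    exact (key_lemma K hfun φ 0 _ (p 0)).mp (h hp0)
end
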